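/- Let G and H be isoclinic finite groups. Then for all n ≥ 0, α_{G,n}/|G|^n = α_{H,n}/|H|^n, where α_{G,n} is the number of simultaneous conjugacy classes of n-tuples; equivalently A_G(t/|G|) = A_H(t/|H|). -/

import Mathlib

/-- Number of orbits of `G` acting on `G^n` by simultaneous conjugation. -/
noncomputable def alphaOrbits (G : Type*) [Group G] (n : ℕ) : ℕ :=
  Nat.card (Quotient (MulAction.orbitRel (ConjAct G) (Fin n → G)))

/-- Pairwise commuting `n`-tuples as a sub-`MulAction` of the conjugation action. -/
def commTuples (G : Type*) [Group G] (n : ℕ) : SubMulAction (ConjAct G) (Fin n → G) where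
  carrier := {x | ∀ i j, Commute (x i) (x j)}
  smul_mem' := by
    intro g x hx i j
    have h := (hx i j).map (MulAut.conj (ConjAct.ofConjAct g)).toMonoidHom
    simpa [ConjAct.smul_def, MulAut.conj_apply, mul_assoc] using h

/-- Number of orbits of `G` acting on pairwise-commuting `n`-tuples by
simultaneous conjugation. -/
noncomputable def betaOrbits (G : Type*) [Group G] (n : ℕ) : ℕ :=
  Nat.card (Quotient (MulAction.orbitRel (ConjAct G) (commTuples G n)))

open scoped commutatorElement

/-- Isoclinism of groups: compatible isomorphisms of central quotients and commutator
subgroups intertwining the commutator maps. -/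
def Isoclinic (G H : Type*) [Group G] [Group H] : Prop :=
  ∃ (θ : (G ⧸ Subgroup.center G) ≃* (H ⧸ Subgroup.center H))
    (φ : commutator G ≃* commutator H),
    ∀ (g₁ g₂ : G) (h₁ h₂ : H),
      θ (QuotientGroup.mk g₁) = QuotientGroup.mk h₁ →
      θ (QuotientGroup.mk g₂) = QuotientGroup.mk h₂ →
      (φ ⟨⁅g₁, g₂⁆,
          Subgroup.commutator_mem_commutator (Subgroup.mem_top g₁)
            (Subgroup.mem_top g₂)⟩ : H) = ⁅h₁, h₂⁆

/-!
By Burnside's lemma `α_{G,n} |G| = ∑_g |C_G(g)|^n`. The centralizer of `g` is the full preimage in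
`G` of the set of cosets `b ∈ G/Z(G)` whose lifts commute with those of `g Z(G)`; writing `N(a)`
for the size of this set, `α_{G,n}/|G|^n = ∑_{a ∈ G/Z(G)} N(a)^n / |G/Z(G)|^{n+1}`. Two lifts
commute iff their commutator is trivial, so an isoclinism `θ` satisfies `N(θ a) = N(a)`, and the
right-hand side is an isoclinism invariant.
-/

open MulAction Subgroup

theorem MulAction.card_fixedBy_pi {M α ι : Type*} [Monoid M] [MulAction M α] [Finite ι] (m : M) :
    Nat.card (fixedBy (ι → α) m) = Nat.card (fixedBy α m) ^ Nat.card ι := by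
  rw [← Nat.card_fun]
  refine Nat.card_congr ((Equiv.subtypeEquivRight fun x => ?_).trans Equiv.subtypePiEquivPi)
  simp [mem_fixedBy, funext_iff]

theorem ConjAct.fixedBy_toConjAct {G : Type*} [Group G] (g : G) :
    fixedBy G (ConjAct.toConjAct g) = centralizer {g} := by
  ext x
  rw [mem_fixedBy, ConjAct.toConjAct_smul, SetLike.mem_coe, mem_centralizer_singleton_iff,
    mul_inv_eq_iff_eq_mul, eq_comm]

theorem alphaOrbits_mul_card_eq_sum_centralizer (G : Type*) [Group G] [Fintype G] (n : ℕ) :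
    alphaOrbits G n * Nat.card G = ∑ g : G, Nat.card (centralizer {g}) ^ n := by
  classical
  have := Fintype.ofFinite (Quotient (orbitRel (ConjAct G) (Fin n → G)))
  have (c : ConjAct G) := Fintype.ofFinite (fixedBy (Fin n → G) c)
  rw [alphaOrbits, Nat.card_eq_fintype_card, Nat.card_eq_fintype_card, ← ConjAct.card (G := G),
    ← sum_card_fixedBy_eq_card_orbits_mul_card_group]
  refine (Fintype.sum_equiv ConjAct.toConjAct.toEquiv _ _ fun g => ?_).symm
  rw [← Nat.card_eq_fintype_card, card_fixedBy_pi, Nat.card_fin, MulEquiv.toEquiv_eq_coe,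
    MulEquiv.coe_toEquiv, ConjAct.fixedBy_toConjAct]
  rfl

theorem QuotientGroup.sum_comp_mk {G M : Type*} [Group G] [Fintype G] [AddCommMonoid M]
    (s : Subgroup G) [Fintype (G ⧸ s)] (f : G ⧸ s → M) :
    ∑ g : G, f g = Nat.card s • ∑ a, f a := by
  classical
  rw [← Finset.sum_fiberwise Finset.univ ((↑) : G → G ⧸ s), Finset.smul_sum]
  refine Fintype.sum_congr _ _ fun a => ?_
  rw [Finset.sum_congr rfl fun g hg => congrArg f (Finset.mem_filter.mp hg).2, Finset.sum_const]
  congr 1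
  have := card_preimage_mk s {a}
  rw [Nat.card_unique (α := ({a} : Set (G ⧸ s))), mul_one] at this
  rw [← this, Nat.card_eq_fintype_card, Fintype.card_subtype]
  simp

section LiftsCommute

variable {G : Type*} [Group G]

def LiftsCommute (a b : G ⧸ center G) : Prop :=
  ∃ g₁ g₂ : G, (g₁ : G ⧸ center G) = a ∧ (g₂ : G ⧸ center G) = b ∧ Commute g₁ g₂

theorem Commute.of_mk_center_eq {g₁ g₂ h₁ h₂ : G} (e₁ : (g₁ : G ⧸ center G) = h₁)
    (e₂ : (g₂ : G ⧸ center G) = h₂) (hg : Commute g₁ g₂) : Commute h₁ h₂ := by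
  rw [QuotientGroup.eq] at e₁ e₂
  have central {z : G} (hz : z ∈ center G) (x : G) : Commute x z := mem_center_iff.mp hz x
  rw [← mul_inv_cancel_left g₁ h₁, ← mul_inv_cancel_left g₂ h₂]
  exact (hg.mul_right (central e₂ g₁)).mul_left (central e₁ _).symm

theorem liftsCommute_mk_iff (g₁ g₂ : G) :
    LiftsCommute (g₁ : G ⧸ center G) g₂ ↔ Commute g₁ g₂ :=
  ⟨fun ⟨_, _, e₁, e₂, h⟩ => h.of_mk_center_eq e₁ e₂, fun h => ⟨g₁, g₂, rfl, rfl, h⟩⟩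

theorem card_centralizer_singleton (g : G) :
    Nat.card (centralizer {g}) =
      Nat.card (center G) * Nat.card {b : G ⧸ center G // LiftsCommute b g} := by
  have preimage : (centralizer {g} : Set G) =
      ((↑) : G → G ⧸ center G) ⁻¹' {b | LiftsCommute b g} := by
    ext x
    simp only [SetLike.mem_coe, mem_centralizer_singleton_iff, Set.mem_preimage,
      Set.mem_ofPred_eq, liftsCommute_mk_iff]
    rfl
  exact (Nat.card_congr (Equiv.setCongr preimage)).trans (QuotientGroup.card_preimage_mk _ _)

theorem alphaOrbits_mul_card_eq_card_center_pow_mul (G : Type*) [Group G] [Fintype G]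
    [Fintype (G ⧸ center G)] (n : ℕ) :
    alphaOrbits G n * Nat.card G = Nat.card (center G) ^ (n + 1) *
      ∑ a : G ⧸ center G, Nat.card {b : G ⧸ center G // LiftsCommute b a} ^ n := by
  simp_rw [alphaOrbits_mul_card_eq_sum_centralizer, card_centralizer_singleton, mul_pow,
    QuotientGroup.sum_comp_mk (center G) fun a =>
      Nat.card (center G) ^ n * Nat.card {b : G ⧸ center G // LiftsCommute b a} ^ n,
    ← Finset.mul_sum, smul_eq_mul, pow_succ]
  ring

theorem alphaOrbits_div_card_pow (G : Type*) [Group G] [Fintype G] [Fintype (G ⧸ center G)]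
    (n : ℕ) :
    (alphaOrbits G n : ℚ) / (Nat.card G : ℚ) ^ n =
      (∑ a : G ⧸ center G, (Nat.card {b : G ⧸ center G // LiftsCommute b a} : ℚ) ^ n) /
        (Nat.card (G ⧸ center G) : ℚ) ^ (n + 1) := by
  have key : (alphaOrbits G n : ℚ) * Nat.card G = Nat.card (center G) ^ (n + 1) *
      ∑ a : G ⧸ center G, (Nat.card {b : G ⧸ center G // LiftsCommute b a} : ℚ) ^ n := by
    exact_mod_cast alphaOrbits_mul_card_eq_card_center_pow_mul G n
  rw [card_eq_card_quotient_mul_card_subgroup (center G), Nat.cast_mul] at key ⊢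
  have hq : (Nat.card (G ⧸ center G) : ℚ) ≠ 0 := Nat.cast_ne_zero.mpr Nat.card_pos.ne'
  have hz : (Nat.card (center G) : ℚ) ≠ 0 := Nat.cast_ne_zero.mpr Nat.card_pos.ne'
  rw [div_eq_div_iff (by simp [hz]) (pow_ne_zero _ hq)]
  refine mul_right_cancel₀ hz ?_
  linear_combination (Nat.card (G ⧸ center G) : ℚ) ^ n * key

end LiftsCommute

theorem Isoclinic.exists_mulEquiv_liftsCommute_iff {G H : Type*} [Group G] [Group H]
    (h : Isoclinic G H) : ∃ θ : (G ⧸ center G) ≃* (H ⧸ center H),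
      ∀ a b, LiftsCommute (θ a) (θ b) ↔ LiftsCommute a b := by
  obtain ⟨θ, φ, hc⟩ := h
  refine ⟨θ, fun a b => ?_⟩
  obtain ⟨g₁, rfl⟩ := QuotientGroup.mk_surjective a
  obtain ⟨g₂, rfl⟩ := QuotientGroup.mk_surjective b
  obtain ⟨h₁, e₁⟩ := QuotientGroup.mk_surjective (θ g₁)
  obtain ⟨h₂, e₂⟩ := QuotientGroup.mk_surjective (θ g₂)
  rw [← e₁, ← e₂, liftsCommute_mk_iff, liftsCommute_mk_iff,
    ← commutatorElement_eq_one_iff_commute, ← commutatorElement_eq_one_iff_commute,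
    ← hc g₁ g₂ h₁ h₂ e₁.symm e₂.symm]
  simp [Subtype.ext_iff]

/-- Isoclinic finite groups have proportional orbit-count sequences:
`α_{G,n}/|G|^n = α_{H,n}/|H|^n`. -/
theorem isoclinic_alpha_normalized (G H : Type*) [Group G] [Fintype G]
    [Group H] [Fintype H] (h : Isoclinic G H) (n : ℕ) :
    (alphaOrbits G n : ℚ) / (Nat.card G : ℚ) ^ n =
      (alphaOrbits H n : ℚ) / (Nat.card H : ℚ) ^ n := by
  classical
  obtain ⟨θ, hθ⟩ := h.exists_mulEquiv_liftsCommute_iff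
  rw [alphaOrbits_div_card_pow, alphaOrbits_div_card_pow, Nat.card_congr θ.toEquiv]
  congr 1
  refine Fintype.sum_equiv θ.toEquiv _ _ fun a => ?_
  have liftsCommute_equiv := θ.toEquiv.subtypeEquiv (q := (LiftsCommute · (θ a))) fun b =>
    (hθ b a).symm
  rw [Nat.card_congr liftsCommute_equiv]
  rfl
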